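/- Let T = (T_1,…,T_n) be a pure commuting row contraction on H with defect operator D and defect space 𝒟 = \overline{ran} D. Define Π* : H → H_n²(𝒟) by (Π*h)(z) = D(I - ∑ z_i T_i*)^{-1} h = ∑_{k∈ℕ^n} γ_k (D T^{*k} h) z^k. Then Π* is an isometry; i.e., ‖Π* h‖²_{H_n²(𝒟)} = ∑_{k∈ℕ^n} γ_k ‖D T^{*k} h‖² = ‖h‖² for all h ∈ H. -/

import Mathlib

/-! Write `P X = ∑ Tᵢ X Tᵢ*`. The maps `X ↦ Tᵢ X Tᵢ*` commute, so the multinomial theorem gives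
`Pᵐ X = ∑_{|k| = m} γ_k T^k X T^{*k}`. Taking `X = D² = 1 - P 1` and pairing with `h`, the
terms of the series with `|k| = m` add up to `⟪Pᵐ(1) h, h⟫ - ⟪Pᵐ⁺¹(1) h, h⟫`. These telescope,
and purity gives `⟪Pᵐ(1) h, h⟫ → 0`, which leaves `⟪h, h⟫ = ‖h‖²`. -/

open ContinuousLinearMap Filter Finset Topology
open scoped InnerProductSpace

theorem hasSum_of_tendsto_sum_of_monotone {ι : Type*} {f : ι → ℝ} (hf : 0 ≤ f)
    {s : ℕ → Finset ι} (hs : Monotone s) (hcover : ∀ i, ∃ M, i ∈ s M) {a : ℝ}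
    (h : Tendsto (fun M => ∑ i ∈ s M, f i) atTop (𝓝 a)) : HasSum f a := by
  have hs_top := tendsto_atTop_finset_of_monotone hs hcover
  have hsum : Summable f := summable_of_sum_le hf fun u => by
    obtain ⟨M, hM⟩ := (hs_top.eventually (eventually_ge_atTop u)).exists
    have hmono : Monotone fun M => ∑ i ∈ s M, f i :=
      fun _ _ hle => sum_le_sum_of_subset_of_nonneg (hs hle) fun i _ _ => hf i
    exact (sum_le_sum_of_subset_of_nonneg hM fun i _ _ => hf i).trans (hmono.ge_of_tendsto h M)
  exact (tendsto_nhds_unique h (hsum.hasSum.comp hs_top)) ▸ hsum.hasSum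

theorem hasSum_of_tendsto_sum_piAntidiag {ι : Type*} [Fintype ι] [DecidableEq ι]
    {f : (ι → ℕ) → ℝ} (hf : 0 ≤ f) {a : ℝ}
    (h : Tendsto (fun M => ∑ m ∈ range M, ∑ k ∈ piAntidiag univ m, f k) atTop (𝓝 a)) :
    HasSum f a := by
  refine hasSum_of_tendsto_sum_of_monotone hf (s := fun M => (range M).biUnion (piAntidiag univ))
    (fun _ _ hle => biUnion_subset_biUnion_of_subset_left _ (range_mono hle))
    (fun k => ⟨∑ i, k i + 1, mem_biUnion.2 ⟨∑ i, k i, by simp⟩⟩) ?_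
  refine h.congr fun M => (sum_biUnion fun m _ m' _ hne => ?_).symm
  exact disjoint_left.2 fun k hk hk' =>
    hne ((mem_piAntidiag.1 hk).1.symm.trans (mem_piAntidiag.1 hk').1)

theorem star_list_prod_of_pairwise_commute {R : Type*} [Monoid R] [StarMul R] {l : List R}
    (hl : l.Pairwise Commute) : star l.prod = (l.map star).prod := by
  induction l with
  | nil => simp
  | cons x l ih =>
    rw [List.pairwise_cons] at hl
    rw [List.prod_cons, star_mul, ((Commute.list_prod_right _ _ hl.1).star_star).eq.symm,
      ih hl.2, List.map_cons, List.prod_cons]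

theorem Nat.cast_multinomial {K α : Type*} [Field K] [CharZero K] (s : Finset α) (f : α → ℕ) :
    (Nat.multinomial s f : K) = ((∑ i ∈ s, f i).factorial : K) / ∏ i ∈ s, ((f i).factorial : K) := by
  rw [eq_div_iff (prod_ne_zero_iff.2 fun i _ => Nat.cast_ne_zero.2 (Nat.factorial_ne_zero _)),
    mul_comm]
  exact_mod_cast Nat.multinomial_spec s f

theorem star_prod_ofFn_pow {R : Type*} [Monoid R] [StarMul R] {n : ℕ} (a : Fin n → R)
    (ha : ∀ i j, Commute (a i) (a j)) (k : Fin n → ℕ) :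
    star (List.ofFn fun i => a i ^ k i).prod = (List.ofFn fun i => star (a i) ^ k i).prod := by
  rw [star_list_prod_of_pairwise_commute (List.pairwise_ofFn.2 fun i j _ => (ha i j).pow_pow _ _)]
  simp [List.map_ofFn, Function.comp_def, star_pow]

theorem noncommProd_univ_eq_prod_ofFn {M : Type*} [Monoid M] {n : ℕ} (f : Fin n → M)
    (hf : ((univ : Finset (Fin n)) : Set (Fin n)).Pairwise (Function.onFun Commute f)) :
    univ.noncommProd f hf = (List.ofFn f).prod := by
  simp [noncommProd, Fin.univ_val_map]

section StarConj

variable (R : Type*) {A : Type*} [CommSemiring R] [Semiring A] [Algebra R A] [StarMul A]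

def starConj : A →* Module.End R A where
  toFun a := LinearMap.mulLeftRight R (a, star a)
  map_one' := by ext x; simp
  map_mul' a b := by ext x; simp [mul_assoc]

@[simp] theorem starConj_apply (a x : A) : starConj R a x = a * x * star a := rfl

variable {R} {n : ℕ}

theorem sum_starConj_pow_apply (a : Fin n → A) (ha : ∀ i j, Commute (a i) (a j)) (m : ℕ) (x : A) :
    ((∑ i, starConj R (a i)) ^ m) x = ∑ k ∈ piAntidiag univ m,
      Nat.multinomial univ k • ((List.ofFn fun i => a i ^ k i).prod * x *
        star (List.ofFn fun i => a i ^ k i).prod) := by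
  have hc : ((univ : Finset (Fin n)) : Set (Fin n)).Pairwise
      (Function.onFun Commute fun i => starConj R (a i)) :=
    fun i _ j _ _ => (ha i j).map (starConj R)
  rw [sum_pow_eq_sum_piAntidiag_of_commute _ _ hc, LinearMap.sum_apply]
  refine sum_congr rfl fun k _ => ?_
  have hword : (List.ofFn fun i => starConj R (a i) ^ k i).prod
      = starConj R (List.ofFn fun i => a i ^ k i).prod := by
    simp [map_list_prod, List.map_ofFn, Function.comp_def]
  rw [noncommProd_univ_eq_prod_ofFn, Module.End.mul_apply, Module.End.natCast_apply, hword,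
    starConj_apply]

end StarConj

section Operators

variable {𝕜 H : Type*} [RCLike 𝕜] [NormedAddCommGroup H] [InnerProductSpace 𝕜 H] [CompleteSpace H]

theorem re_inner_mul_mul_star_apply (W D : H →L[𝕜] H) (hD : IsSelfAdjoint D) (h : H) :
    RCLike.re ⟪(W * (D * D) * star W) h, h⟫_𝕜 = ‖D (star W h)‖ ^ 2 := by
  have hadj : adjoint (D * star W) = W * D := by
    rw [← star_eq_adjoint, star_mul, star_star, hD.star_eq]
  rw [← mul_apply_eq_comp, apply_norm_sq_eq_inner_adjoint_left, hadj, ← ContinuousLinearMap.mul_def]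
  simp only [mul_assoc]

theorem re_inner_sum_starConj_pow_apply {n : ℕ} (T : Fin n → H →L[𝕜] H)
    (hT : ∀ i j, Commute (T i) (T j)) (D : H →L[𝕜] H) (hD : IsSelfAdjoint D) (m : ℕ) (h : H) :
    RCLike.re ⟪((∑ i, starConj 𝕜 (T i)) ^ m) (D * D) h, h⟫_𝕜 =
      ∑ k ∈ piAntidiag univ m,
        (Nat.multinomial univ k : ℝ) * ‖D ((List.ofFn fun i => adjoint (T i) ^ k i).prod h)‖ ^ 2 := by
  rw [sum_starConj_pow_apply _ hT, _root_.sum_apply, sum_inner, map_sum]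
  refine sum_congr rfl fun k _ => ?_
  rw [smul_apply, ← Nat.cast_smul_eq_nsmul 𝕜, inner_smul_left, map_natCast,
    ← RCLike.ofReal_natCast, RCLike.re_ofReal_mul, re_inner_mul_mul_star_apply _ _ hD,
    star_prod_ofFn_pow _ hT]
  simp [star_eq_adjoint]

end Operators

theorem stmt17_general {H : Type*} [NormedAddCommGroup H] [InnerProductSpace ℂ H] [CompleteSpace H]
    {n : ℕ} (T : Fin n → H →L[ℂ] H)
    (hcomm : ∀ i j, T i ∘L T j = T j ∘L T i)
    (hpure : ∀ h : H,
      Filter.Tendsto (fun m => ((fun X : H →L[ℂ] H => ∑ i, T i ∘L X ∘L adjoint (T i))^[m] 1) h)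
        Filter.atTop (nhds 0))
    (D : H →L[ℂ] H) (hDpos : D.IsPositive)
    (hD : D ∘L D = (1 : H →L[ℂ] H) - ∑ i, T i ∘L adjoint (T i))
    (h : H) :
    HasSum
      (fun k : Fin n → ℕ =>
        (((∑ i, k i).factorial : ℝ) / ∏ i, ((k i).factorial : ℝ)) *
          ‖D ((List.ofFn fun i => (adjoint (T i)) ^ (k i)).prod h)‖ ^ 2)
      (‖h‖ ^ 2) := by
  set Φ := ∑ i, starConj ℂ (T i)
  have hΦ : (fun X : H →L[ℂ] H => ∑ i, T i ∘L X ∘L adjoint (T i)) = Φ := by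
    ext X : 1
    simp only [Φ, LinearMap.sum_apply, starConj_apply, star_eq_adjoint, ContinuousLinearMap.mul_def]
    rfl
  set c : ℕ → ℝ := fun m => RCLike.re ⟪(Φ ^ m) 1 h, h⟫_ℂ
  have hc0 : c 0 = ‖h‖ ^ 2 := by
    simp only [c, pow_zero, Module.End.one_apply, one_apply_eq_self, inner_self_eq_norm_sq]
  have hlevel (m : ℕ) : ∑ k ∈ piAntidiag univ m,
      (Nat.multinomial univ k : ℝ) * ‖D ((List.ofFn fun i => adjoint (T i) ^ k i).prod h)‖ ^ 2 =
        c m - c (m + 1) := by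
    have hDD : D * D = 1 - Φ 1 := by
      rw [ContinuousLinearMap.mul_def, hD, ← hΦ]
      simp only [ContinuousLinearMap.one_def, ContinuousLinearMap.id_comp]
    rw [← re_inner_sum_starConj_pow_apply T hcomm D hDpos.isSelfAdjoint, hDD, map_sub, sub_apply,
      inner_sub_left, map_sub]
    simp only [c, Φ, pow_succ, Module.End.mul_apply]
  have hc : Tendsto c atTop (𝓝 0) := by
    have hcont : Continuous fun x : H => RCLike.re ⟪x, h⟫_ℂ := by fun_prop
    simpa only [hΦ, c, Function.comp_def, Module.End.coe_pow, zero_apply, inner_zero_left,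
      map_zero] using (hcont.tendsto 0).comp (hpure h)
  simp_rw [← Nat.cast_multinomial]
  refine hasSum_of_tendsto_sum_piAntidiag (fun k => by positivity) ?_
  simp_rw [hlevel, sum_range_sub']
  simpa [hc0] using hc.const_sub (c 0)

/-- For a pure commuting row contraction `T` with defect operator `D`, the map
`Π* h = ∑_k γ_k (D T^{*k} h) z^k` into the `𝒟`-valued Drury–Arveson space is an isometry:
`∑_{k ∈ ℕⁿ} γ_k ‖D T^{*k} h‖² = ‖h‖²` for every `h ∈ H`. -/
theorem stmt17 {H : Type*} [NormedAddCommGroup H] [InnerProductSpace ℂ H] [CompleteSpace H]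
    {n : ℕ} (T : Fin n → H →L[ℂ] H)
    (hcomm : ∀ i j, T i ∘L T j = T j ∘L T i)
    (hrow : ((1 : H →L[ℂ] H) - ∑ i, T i ∘L adjoint (T i)).IsPositive)
    (hpure : ∀ h : H,
      Filter.Tendsto (fun m => ((fun X : H →L[ℂ] H => ∑ i, T i ∘L X ∘L adjoint (T i))^[m] 1) h)
        Filter.atTop (nhds 0))
    (D : H →L[ℂ] H) (hDpos : D.IsPositive)
    (hD : D ∘L D = (1 : H →L[ℂ] H) - ∑ i, T i ∘L adjoint (T i))
    (h : H) :
    HasSum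
      (fun k : Fin n → ℕ =>
        (((∑ i, k i).factorial : ℝ) / ∏ i, ((k i).factorial : ℝ)) *
          ‖D ((List.ofFn fun i => (adjoint (T i)) ^ (k i)).prod h)‖ ^ 2)
      (‖h‖ ^ 2) :=
  stmt17_general T hcomm hpure D hDpos hD h
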